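/- Let v ∈ Z^n be an integer point lying on a k-dimensional face of the integer hull P_I = conv(P ∩ Z^n), let u = b − A v be its slack vector, and let Z = {i ∈ {1,…,m} : u_i ≤ Δ − 1}. Then rank(A_Z) ≥ n − k. -/

import Mathlib

open Matrix Set

noncomputable def matR {m n : ℕ} (A : Matrix (Fin m) (Fin n) ℤ) :
    Matrix (Fin m) (Fin n) ℝ := A.map (fun a => (a : ℝ))

def poly {m n : ℕ} (A : Matrix (Fin m) (Fin n) ℤ) (b : Fin m → ℤ) :
    Set (Fin n → ℝ) := {x | ∀ i, (matR A).mulVec x i ≤ (b i : ℝ)}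

def intPts {n : ℕ} : Set (Fin n → ℝ) := {x | ∀ j, ∃ z : ℤ, x j = (z : ℝ)}

noncomputable def intHull {m n : ℕ} (A : Matrix (Fin m) (Fin n) ℤ) (b : Fin m → ℤ) :
    Set (Fin n → ℝ) := convexHull ℝ (poly A b ∩ intPts)

def maxAbsSubdet {m n : ℕ} (A : Matrix (Fin m) (Fin n) ℤ) : ℕ :=
  Finset.univ.sup fun f : Fin n → Fin m => ((A.submatrix f id).det).natAbs

noncomputable def rowsRank {m n : ℕ} (A : Matrix (Fin m) (Fin n) ℤ) (J : Finset (Fin m)) : ℕ :=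
  ((matR A).submatrix (fun i : {i // i ∈ J} => (i : Fin m)) id).rank

/-!
Pick `n` linearly independent rows of `A`, forming a square matrix `B`, among which the rows
indexed by `T` are a basis of the row space of `A_Z`. For `t ∉ T` the Cramer vector
`d = adj(B) e_t` is integral, is annihilated by every row of `A_Z` (these lie in the span of
the rows `B_T`, and `B d = det(B) e_t`), and satisfies `|A_i d| = |det B[t ← A_i]| ≤ Δ` for every
row `i`. Rows outside `Z` have slack at least `Δ`, so `v ± d` are both integer points of `P`,
and since the face is extreme, `d` lies in the direction of its affine hull. The `n - |T|`
vectors `d` are linearly independent, whence `n - k ≤ |T| ≤ rank(A_Z)`.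
-/

open Module Submodule

namespace Matrix

section CommRing

variable {ι R : Type*} [Fintype ι] [DecidableEq ι] [CommRing R] (B : Matrix ι ι R)

theorem dotProduct_cramer_single (a : ι → R) (t : ι) :
    a ⬝ᵥ B.cramer (Pi.single t 1) = (B.updateRow t a).det := by
  rw [cramer_eq_adjugate_mulVec, dotProduct_mulVec, dotProduct_single, mul_one,
    ← mulVec_transpose, adjugate_transpose, ← cramer_eq_adjugate_mulVec, cramer_transpose_apply]

theorem dotProduct_cramer_single_eq_zero {T : Set ι} {a : ι → R} (ha : a ∈ span R (B.row '' T))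
    {t : ι} (ht : t ∉ T) : a ⬝ᵥ B.cramer (Pi.single t 1) = 0 := by
  induction ha using Submodule.span_induction with
  | mem x hx =>
    obtain ⟨t', ht', rfl⟩ := hx
    have hne : t' ≠ t := fun h => ht (h ▸ ht')
    change (B *ᵥ B.cramer (Pi.single t 1)) t' = 0
    simp [mulVec_cramer, hne]
  | zero => exact zero_dotProduct _
  | add x y _ _ hx hy => rw [add_dotProduct, hx, hy, add_zero]
  | smul c x _ hx => rw [smul_dotProduct, hx, smul_zero]

end CommRing

theorem updateRow_submatrix_self {ι m α : Type*} [DecidableEq ι] [DecidableEq m]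
    (M : Matrix m ι α) (g : ι → m) (t : ι) (i : m) :
    (M.submatrix g id).updateRow t (M i) = M.submatrix (Function.update g t i) id := by
  ext t' j
  by_cases h : t' = t <;> simp [updateRow_apply, h]

section Field

variable {ι K : Type*} [Fintype ι] [DecidableEq ι] [Field K] {B : Matrix ι ι K}

theorem cramer_injective (hB : B.det ≠ 0) : Function.Injective B.cramer := fun x y hxy => by
  have h := congrArg (B *ᵥ ·) hxy
  simp only [mulVec_cramer] at h
  exact smul_right_injective _ hB h

theorem linearIndependent_cramer_single (hB : B.det ≠ 0) :
    LinearIndependent K fun t => B.cramer (Pi.single t 1) := by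
  simpa [Function.comp_def] using (Pi.basisFun K ι).linearIndependent.map' B.cramer
    (LinearMap.ker_eq_bot.mpr (cramer_injective hB))

end Field

end Matrix

theorem IsExtreme.mem_direction_affineSpan_of_add_mem_of_sub_mem {𝕜 E : Type*} [Field 𝕜]
    [LinearOrder 𝕜] [IsStrictOrderedRing 𝕜] [AddCommGroup E] [Module 𝕜 E] {C F : Set E}
    (hF : IsExtreme 𝕜 C F) {x y : E} (hx : x ∈ F) (hadd : x + y ∈ C) (hsub : x - y ∈ C) :
    y ∈ (affineSpan 𝕜 F).direction := by
  have hmid : x ∈ openSegment 𝕜 (x + y) (x - y) :=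
    ⟨1 / 2, 1 / 2, by norm_num, by norm_num, by norm_num, by module⟩
  have hF_add : x + y ∈ F := hF.left_mem_of_mem_openSegment hadd hsub hx hmid
  simpa using AffineSubspace.vsub_mem_direction (mem_affineSpan 𝕜 hF_add) (mem_affineSpan 𝕜 hx)

theorem exists_linearIndependent_comp_extending_span_image {ι K V : Type*} [Field K]
    [AddCommGroup V] [Module K V] [FiniteDimensional K V] {a : ι → V}
    (ha : span K (range a) = ⊤) {d : ℕ} (hd : finrank K V = d) (Z : Set ι) :
    ∃ (g : Fin d → ι) (T : Finset (Fin d)), LinearIndependent K (a ∘ g) ∧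
      a '' Z ⊆ span K ((a ∘ g) '' T) ∧ T.card ≤ finrank K (span K (a '' Z)) := by
  classical
  obtain ⟨s, hsZ, -, hZs, hs⟩ := exists_linearIndepOn_extension (linearIndepOn_empty K a)
    (empty_subset Z)
  obtain ⟨r, -, hsr, hr_span, hr⟩ := exists_linearIndepOn_extension hs (subset_univ s)
  have hr_top : span K (range fun x : r => a x) = ⊤ := by
    rw [← image_eq_range, eq_top_iff, ← ha, ← image_univ]
    exact span_le.mpr hr_span
  have : Fintype r := @Fintype.ofFinite _ hr.finite
  obtain ⟨e⟩ : Nonempty (Fin d ≃ r) := by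
    refine ⟨(Fintype.equivFinOfCardEq ?_).symm⟩
    rw [← hd, ← finrank_top K V, ← hr_top, finrank_span_eq_card hr]
  have hs_img :
      a '' s ⊆ (a ∘ fun t => (e t : ι)) '' (Finset.univ.filter fun t => (e t : ι) ∈ s) := by
    rintro _ ⟨x, hx, rfl⟩
    exact ⟨e.symm ⟨x, hsr hx⟩, by simpa using hx, by simp⟩
  refine ⟨fun t => e t, Finset.univ.filter fun t => (e t : ι) ∈ s, hr.comp e e.injective,
    hZs.trans (span_mono hs_img), ?_⟩
  have : Fintype s := @Fintype.ofFinite _ hs.finite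
  calc _ ≤ s.toFinset.card :=
        Finset.card_le_card_of_injOn (fun t => (e t : ι)) (fun t ht => by simpa using ht)
          fun t₁ _ t₂ _ h => e.injective (Subtype.val_injective h)
    _ = finrank K (span K (a '' s)) := by
        rw [toFinset_card, image_eq_range, finrank_span_eq_card hs]
    _ ≤ finrank K (span K (a '' Z)) := finrank_mono (span_mono (image_mono hsZ))

section Polyhedron

variable {m n : ℕ} (A : Matrix (Fin m) (Fin n) ℤ) (b : Fin m → ℤ)

theorem convex_poly : Convex ℝ (poly A b) :=
  (convex_Iic fun i => (b i : ℝ)).linear_preimage (matR A).mulVecLin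

theorem intHull_subset_poly : intHull A b ⊆ poly A b :=
  convexHull_min inter_subset_left (convex_poly A b)

theorem matR_mulVec_intCast (x : Fin n → ℤ) :
    matR A *ᵥ (fun j => (x j : ℝ)) = fun i => ((A *ᵥ x) i : ℝ) := by
  funext i
  exact ((Int.castRingHom ℝ).map_mulVec A x i).symm

theorem add_mem_poly_and_sub_mem_poly {x y : Fin n → ℝ}
    (h : ∀ i, |(matR A *ᵥ y) i| ≤ b i - (matR A *ᵥ x) i) :
    x + y ∈ poly A b ∧ x - y ∈ poly A b := by
  constructor <;> intro i <;> have := abs_le.mp (h i) <;>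
    simp only [mulVec_add, mulVec_sub, Pi.add_apply, Pi.sub_apply] <;> linarith

theorem abs_det_submatrix_le_maxAbsSubdet (f : Fin n → Fin m) :
    |((matR A).submatrix f id).det| ≤ maxAbsSubdet A := by
  have hdet : ((matR A).submatrix f id).det = ((A.submatrix f id).det : ℝ) :=
    ((Int.castRingHom ℝ).map_det _).symm
  rw [hdet, ← Int.cast_abs, Int.abs_eq_natAbs, Int.cast_natCast, Nat.cast_le]
  exact Finset.le_sup (f := fun f => (A.submatrix f id).det.natAbs) (Finset.mem_univ f)

theorem abs_mulVec_cramer_single_le (g : Fin n → Fin m) (t : Fin n) (i : Fin m) :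
    |(matR A *ᵥ ((matR A).submatrix g id).cramer (Pi.single t 1)) i| ≤ maxAbsSubdet A := by
  rw [mulVec, dotProduct_cramer_single, updateRow_submatrix_self]
  exact abs_det_submatrix_le_maxAbsSubdet A _

end Polyhedron

theorem add_mem_intPts {n : ℕ} {x y : Fin n → ℝ} (hx : x ∈ intPts) (hy : y ∈ intPts) :
    x + y ∈ intPts := fun j => by
  obtain ⟨p, hp⟩ := hx j
  obtain ⟨q, hq⟩ := hy j
  exact ⟨p + q, by simp [hp, hq]⟩

theorem sub_mem_intPts {n : ℕ} {x y : Fin n → ℝ} (hx : x ∈ intPts) (hy : y ∈ intPts) :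
    x - y ∈ intPts := fun j => by
  obtain ⟨p, hp⟩ := hx j
  obtain ⟨q, hq⟩ := hy j
  exact ⟨p - q, by simp [hp, hq]⟩

theorem cramer_matR_single_mem_intPts {n : ℕ} (B : Matrix (Fin n) (Fin n) ℤ) (t : Fin n) :
    (matR B).cramer (Pi.single t 1) ∈ intPts := fun j =>
  ⟨(B.updateCol j (Pi.single t 1)).det, by
    rw [cramer_apply, ← eq_intCast (Int.castRingHom ℝ), RingHom.map_det,
      RingHom.mapMatrix_apply, map_updateCol]
    congr 2
    funext j'
    by_cases h : j' = t <;> simp [h]⟩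

section Rows

variable {m n : ℕ} (A : Matrix (Fin m) (Fin n) ℤ)

theorem span_rows_matR_eq_top (hrank : (matR A).rank = n) : span ℝ (range (matR A).row) = ⊤ :=
  eq_top_of_finrank_eq (by rw [← rank_eq_finrank_span_row, hrank, finrank_fin_fun])

theorem rowsRank_eq_finrank_span (Z : Finset (Fin m)) :
    rowsRank A Z = finrank ℝ (span ℝ ((matR A).row '' Z)) := by
  rw [rowsRank, rank_eq_finrank_span_row, image_eq_range]
  rfl

theorem add_sub_cramer_single_mem_poly_inter_intPts (b : Fin m → ℤ) {v : Fin n → ℤ}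
    (hv : (fun j => (v j : ℝ)) ∈ poly A b) (g : Fin n → Fin m) {T : Set (Fin n)}
    (hT : ∀ i, b i - (A *ᵥ v) i < maxAbsSubdet A →
      (matR A).row i ∈ span ℝ (((matR A).submatrix g id).row '' T))
    {t : Fin n} (ht : t ∉ T) :
    (fun j => (v j : ℝ)) + ((matR A).submatrix g id).cramer (Pi.single t 1) ∈
        poly A b ∩ intPts ∧
      (fun j => (v j : ℝ)) - ((matR A).submatrix g id).cramer (Pi.single t 1) ∈
        poly A b ∩ intPts := by
  have hv_int : (fun j => (v j : ℝ)) ∈ intPts := fun j => ⟨v j, rfl⟩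
  have hd_int := cramer_matR_single_mem_intPts (A.submatrix g id) t
  have hslack : ∀ i, |(matR A *ᵥ ((matR A).submatrix g id).cramer (Pi.single t 1)) i| ≤
      b i - (matR A *ᵥ fun j => (v j : ℝ)) i := by
    intro i
    have hvi := hv i
    simp only [matR_mulVec_intCast] at hvi ⊢
    by_cases hi : b i - (A *ᵥ v) i < maxAbsSubdet A
    · rw [show (matR A *ᵥ _) i = _ from dotProduct_cramer_single_eq_zero _ (hT i hi) ht, abs_zero]
      linarith
    · refine (abs_mulVec_cramer_single_le A g t i).trans ?_
      exact_mod_cast not_lt.mp hi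
  obtain ⟨hadd, hsub⟩ := add_mem_poly_and_sub_mem_poly A b hslack
  exact ⟨⟨hadd, add_mem_intPts hv_int hd_int⟩, hsub, sub_mem_intPts hv_int hd_int⟩

end Rows

theorem face_point_small_slack_rank_general {m n k : ℕ}
    (A : Matrix (Fin m) (Fin n) ℤ) (b : Fin m → ℤ) (Δ : ℕ)
    (hΔ : maxAbsSubdet A = Δ)
    (hrank : (matR A).rank = n)
    (F : Set (Fin n → ℝ)) (hF : IsExtreme ℝ (intHull A b) F)
    (hFdim : Module.finrank ℝ (affineSpan ℝ F).direction = k)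
    (v : Fin n → ℤ) (hvF : (fun j => (v j : ℝ)) ∈ F)
    (Z : Finset (Fin m))
    (hZ : Z = Finset.univ.filter fun i : Fin m => b i - A.mulVec v i ≤ (Δ : ℤ) - 1) :
    n - k ≤ rowsRank A Z := by
  subst hΔ
  obtain ⟨g, T, hg, hZT, hT⟩ := exists_linearIndependent_comp_extending_span_image
    (span_rows_matR_eq_top A hrank) (finrank_fin_fun ℝ) (Z : Set (Fin m))
  set B := (matR A).submatrix g id
  have hB : B.det ≠ 0 :=
    (B.isUnit_iff_isUnit_det.mp (linearIndependent_rows_iff_isUnit.mp hg)).ne_zero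
  have hsmall : ∀ i, b i - (A *ᵥ v) i < maxAbsSubdet A → i ∈ Z := fun i hi => by
    rw [hZ, Finset.mem_filter]
    exact ⟨Finset.mem_univ i, by omega⟩
  have hdir : ∀ t : ↥Tᶜ, B.cramer (Pi.single t 1) ∈ (affineSpan ℝ F).direction := fun t => by
    obtain ⟨hadd, hsub⟩ := add_sub_cramer_single_mem_poly_inter_intPts A b
      (intHull_subset_poly A b (hF.1 hvF)) g (T := T)
      (fun i hi => hZT ⟨i, hsmall i hi, rfl⟩) (Finset.mem_compl.mp t.2)
    exact hF.mem_direction_affineSpan_of_add_mem_of_sub_mem hvF (subset_convexHull ℝ _ hadd)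
      (subset_convexHull ℝ _ hsub)
  have hind :=
    (linearIndependent_cramer_single hB).comp _ (Subtype.val_injective (p := (· ∈ Tᶜ)))
  have hcard : n - T.card ≤ k := calc
    n - T.card = Fintype.card ↥Tᶜ := by
      rw [Fintype.card_coe, Finset.card_compl, Fintype.card_fin]
    _ = finrank ℝ (span ℝ (range _)) := (finrank_span_eq_card hind).symm
    _ ≤ k := hFdim ▸ finrank_mono (span_le.mpr (range_subset_iff.mpr hdir))
  rw [rowsRank_eq_finrank_span]
  omega

/-- If `v ∈ ℤⁿ` lies on a `k`-dimensional face of the integer hull `P_I`, `u = b - A v` is its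
slack vector and `Z = {i : u_i ≤ Δ - 1}`, then `rank(A_Z) ≥ n - k`. -/
theorem face_point_small_slack_rank {m n k : ℕ}
    (A : Matrix (Fin m) (Fin n) ℤ) (b : Fin m → ℤ) (Δ : ℕ)
    (hΔ : maxAbsSubdet A = Δ) (hΔ1 : 1 ≤ Δ)
    (hrank : (matR A).rank = n)
    (hfull : affineSpan ℝ (poly A b) = ⊤)
    (F : Set (Fin n → ℝ)) (hF : IsExtreme ℝ (intHull A b) F)
    (hFconv : Convex ℝ F) (hFne : F.Nonempty)
    (hFdim : Module.finrank ℝ (affineSpan ℝ F).direction = k)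
    (v : Fin n → ℤ) (hvF : (fun j => (v j : ℝ)) ∈ F)
    (Z : Finset (Fin m))
    (hZ : Z = Finset.univ.filter fun i : Fin m => b i - A.mulVec v i ≤ (Δ : ℤ) - 1) :
    n - k ≤ rowsRank A Z :=
  face_point_small_slack_rank_general A b Δ hΔ hrank F hF hFdim v hvF Z hZ
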